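/- Suppose 2 ≤ |A| ≤ M−1, so that δ := log|A|/log M ∈ (0,1). Then there exists β > 1/2 − δ such that for every ε > 0 there is a constant C_ε > 0 with t_k ≤ C_ε·(M^k)^{−4β+ε} for all k ≥ 1. -/

import Mathlib

/-!
Put `U_k = Σ_{j,l ∈ C_k} |Σ_{x ∈ C_k} e((j - l)x / M^k)|²`, so that `t_k = U_k / M^{2k}`.
Writing points of `C_{p+q}` as `a + M^p b` and as `s + M^q t` with `a, t ∈ C_p`, `b, s ∈ C_q`, the
exponential sum at `j - l` factors into a sum over `t`, which only sees `a - a'` modulo `M^p`, and a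
sum over `s` twisted by the unimodular weights `e((a - a')s / M^{p+q})`. Expanding the square of
the latter exchanges the roles of `b` and `s`, so the twist can only decrease the sum over `b, b'`;
hence `U_{p+q} ≤ U_p U_q` and `U_{n+1} ≤ U_1 (√U_2)^n`. This is `t_k ≲ (M^k)^{-4β}` with
`β = 1/2 - log_M U_2 / 8`, and `β > 1/2 - δ` amounts to the strict bound `U_2 < |A|^8 = |C_2|^4`:
for `a ≠ a'` in `A`, the term `j = x = a + M a'`, `l = y = a' + M a'` carries the phase
`e((a - a')² / M²) ≠ 1`.
-/

open scoped BigOperators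

/-- The Cantor iterates `C_k = {Σ_{j<k} a_j M^j : a_j ∈ A} ⊆ {0,…,M^k-1}`. -/
def Ck (M : ℕ) (A : Finset ℕ) (k : ℕ) : Finset ℕ :=
  (Fintype.piFinset fun _ : Fin k => A).image fun a => ∑ j : Fin k, a j * M ^ (j : ℕ)

/-- The discrete Fourier transform of the indicator function of `S ⊆ Z_N`,
`F_N(1_S)(m) = N^{-1/2} Σ_{l<N} 1_S(l) exp(-2πi m l / N)`; it is `N`-periodic in `m`,
so a residue `m ∈ Z_N` may be fed in via any integer representative. -/
noncomputable def dftInd (N : ℕ) (S : Finset ℕ) (m : ℕ) : ℂ :=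
  ((1 : ℝ) / Real.sqrt N : ℝ) * ∑ l ∈ Finset.range N,
    (if l ∈ S then (1 : ℂ) else 0) * Complex.exp (-(2 * (Real.pi : ℂ) * Complex.I * m * l) / N)

/-- `t_k = (1/N) Σ_{j,ℓ ∈ Z_N} 1_{C_k}(j) 1_{C_k}(ℓ) |F_N(1_{C_k})(ℓ-j)|²`, `N = M^k`,
where `ℓ - j` is taken in `Z_N` (represented by `ℓ + N - j ≡ ℓ - j (mod N)`). -/
noncomputable def tk (M : ℕ) (A : Finset ℕ) (k : ℕ) : ℝ :=
  ((1 : ℝ) / ((M ^ k : ℕ) : ℝ)) * ∑ j ∈ Finset.range (M ^ k), ∑ l ∈ Finset.range (M ^ k),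
    (if j ∈ Ck M A k then (1 : ℝ) else 0) * (if l ∈ Ck M A k then (1 : ℝ) else 0) *
      ‖dftInd (M ^ k) (Ck M A k) (l + M ^ k - j)‖ ^ 2

/-- The additive energy of `X ⊆ Z_N`. -/
def addE (N : ℕ) (X : Finset ℕ) : ℕ :=
  (((X ×ˢ X) ×ˢ (X ×ˢ X)).filter fun p => (p.1.1 + p.1.2) % N = (p.2.1 + p.2.2) % N).card

open Finset

noncomputable def phase (N : ℕ) (z : ℤ) : ℂ :=
  Complex.exp (2 * Real.pi * Complex.I * z / N)

noncomputable def expSum (N : ℕ) (C : Finset ℕ) (d : ℤ) : ℂ :=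
  ∑ x ∈ C, phase N (d * x)

noncomputable def fourierEnergy (N : ℕ) (C : Finset ℕ) : ℝ :=
  ∑ j ∈ C, ∑ l ∈ C, ‖expSum N C (j - l)‖ ^ 2

section Phase

variable {N : ℕ}

lemma phase_zero (N : ℕ) : phase N 0 = 1 := by simp [phase]

lemma phase_add (N : ℕ) (z w : ℤ) : phase N (z + w) = phase N z * phase N w := by
  rw [phase, phase, phase, ← Complex.exp_add]
  congr 1
  push_cast
  ring

lemma conj_phase (N : ℕ) (z : ℤ) : starRingEnd ℂ (phase N z) = phase N (-z) := by
  rw [phase, phase, ← Complex.exp_conj]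
  congr 1
  simp [map_div₀, Complex.conj_I, map_ofNat]

lemma phase_eq_exp_mul_I (N : ℕ) (z : ℤ) :
    phase N z = Complex.exp ((2 * Real.pi * z / N : ℝ) * Complex.I) := by
  rw [phase]
  congr 1
  push_cast
  ring

lemma norm_phase (N : ℕ) (z : ℤ) : ‖phase N z‖ = 1 := by
  rw [phase_eq_exp_mul_I]
  exact Complex.norm_exp_ofReal_mul_I _

lemma phase_mul_natCast_mul {P Q : ℕ} (hP : P ≠ 0) (z : ℤ) :
    phase (P * Q) (P * z) = phase Q z := by
  rcases eq_or_ne Q 0 with rfl | hQ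
  · simp [phase]
  rw [phase, phase]
  congr 1
  push_cast
  field_simp

lemma phase_natCast_mul (hN : N ≠ 0) (z : ℤ) : phase N (N * z) = 1 := by
  rw [phase, ← Complex.exp_int_mul_two_pi_mul_I z]
  congr 1
  have : (N : ℂ) ≠ 0 := Nat.cast_ne_zero.2 hN
  push_cast
  field_simp

lemma phase_add_natCast_mul (hN : N ≠ 0) (z w : ℤ) : phase N (z + N * w) = phase N z := by
  rw [phase_add, phase_natCast_mul hN, mul_one]

lemma re_phase_lt_one (hN : N ≠ 0) {z : ℤ} (hz : ¬ (N : ℤ) ∣ z) : (phase N z).re < 1 := by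
  rw [phase_eq_exp_mul_I, Complex.exp_ofReal_mul_I_re]
  refine lt_of_le_of_ne (Real.cos_le_one _) fun h => hz ?_
  obtain ⟨n, hn⟩ := (Real.cos_eq_one_iff _).1 h
  refine ⟨n, ?_⟩
  have hN' : (N : ℝ) ≠ 0 := Nat.cast_ne_zero.2 hN
  have : (z : ℝ) = N * n := by
    field_simp at hn
    nlinarith [Real.pi_pos]
  exact_mod_cast this

end Phase

lemma ofReal_norm_sum_sq {ι : Type*} (s : Finset ι) (f : ι → ℂ) :
    ((‖∑ x ∈ s, f x‖ ^ 2 : ℝ) : ℂ) = ∑ x ∈ s, ∑ y ∈ s, f x * starRingEnd ℂ (f y) := by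
  rw [← sum_mul_sum, ← map_sum, RCLike.mul_conj]
  push_cast
  rfl

lemma sum_sum_comm_sum_sum {α β γ : Type*} [AddCommMonoid γ] (s : Finset α) (t : Finset β)
    (f : α → α → β → β → γ) :
    ∑ a ∈ s, ∑ a' ∈ s, ∑ b ∈ t, ∑ b' ∈ t, f a a' b b'
      = ∑ b ∈ t, ∑ b' ∈ t, ∑ a ∈ s, ∑ a' ∈ s, f a a' b b' := by
  simp only [sum_comm (s := s) (t := t)]

section ExpSum

variable {N : ℕ} {C : Finset ℕ}

lemma ofReal_norm_expSum_sq (N : ℕ) (C : Finset ℕ) (d : ℤ) :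
    ((‖expSum N C d‖ ^ 2 : ℝ) : ℂ) = ∑ x ∈ C, ∑ y ∈ C, phase N (d * (x - y)) := by
  rw [expSum, ofReal_norm_sum_sq]
  refine sum_congr rfl fun x _ => sum_congr rfl fun y _ => ?_
  rw [conj_phase, ← phase_add, mul_sub, sub_eq_add_neg]

lemma norm_expSum_sq_eq_sum_re (N : ℕ) (C : Finset ℕ) (d : ℤ) :
    ‖expSum N C d‖ ^ 2 = ∑ x ∈ C, ∑ y ∈ C, (phase N (d * (x - y))).re := by
  have := congrArg Complex.re (ofReal_norm_expSum_sq N C d)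
  simpa only [Complex.ofReal_re, Complex.re_sum] using this

lemma norm_expSum_le (N : ℕ) (C : Finset ℕ) (d : ℤ) : ‖expSum N C d‖ ≤ #C := by
  simpa [expSum] using norm_sum_le_of_le C fun x _ => (norm_phase N (d * x)).le

lemma expSum_zero (N : ℕ) (C : Finset ℕ) : expSum N C 0 = #C := by
  simp [expSum, phase_zero]

lemma expSum_add_natCast_mul (hN : N ≠ 0) (d e : ℤ) :
    expSum N C (d + N * e) = expSum N C d := by
  refine sum_congr rfl fun x _ => ?_
  rw [add_mul, mul_assoc, phase_add_natCast_mul hN]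

lemma norm_expSum_sq_lt (hN : N ≠ 0) {d : ℤ} {x y : ℕ} (hx : x ∈ C) (hy : y ∈ C)
    (h : ¬ (N : ℤ) ∣ d * (x - y)) : ‖expSum N C d‖ ^ 2 < #C ^ 2 := by
  rw [norm_expSum_sq_eq_sum_re, ← sum_product']
  calc ∑ p ∈ C ×ˢ C, (phase N (d * (p.1 - p.2))).re < ∑ _p ∈ C ×ˢ C, (1 : ℝ) :=
        sum_lt_sum (fun p _ => (Complex.re_le_norm _).trans (norm_phase _ _).le)
          ⟨(x, y), mem_product.2 ⟨hx, hy⟩, re_phase_lt_one hN h⟩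
    _ = #C ^ 2 := by simp [sq]

lemma expSum_add_natCast_mul_eq_sum {P Q : ℕ} (hP : P ≠ 0) (C : Finset ℕ) (α β : ℤ) :
    expSum (P * Q) C (α + P * β) = ∑ s ∈ C, phase (P * Q) (α * s) * phase Q (β * s) := by
  refine sum_congr rfl fun s _ => ?_
  rw [add_mul, phase_add, mul_assoc, phase_mul_natCast_mul hP]

end ExpSum

section Energy

variable {N : ℕ} {C : Finset ℕ}

lemma fourierEnergy_eq_sum_product (N : ℕ) (C : Finset ℕ) :
    fourierEnergy N C = ∑ p ∈ C ×ˢ C, ‖expSum N C (p.1 - p.2)‖ ^ 2 :=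
  (sum_product' _ _ _).symm

lemma norm_expSum_sq_le (N : ℕ) (C : Finset ℕ) (d : ℤ) : ‖expSum N C d‖ ^ 2 ≤ #C ^ 2 :=
  pow_le_pow_left₀ (norm_nonneg _) (norm_expSum_le N C d) 2

lemma fourierEnergy_lt (hN : N ≠ 0) {j l x y : ℕ} (hj : j ∈ C) (hl : l ∈ C) (hx : x ∈ C)
    (hy : y ∈ C) (h : ¬ (N : ℤ) ∣ (j - l) * (x - y)) : fourierEnergy N C < #C ^ 4 := by
  rw [fourierEnergy_eq_sum_product]
  calc ∑ p ∈ C ×ˢ C, ‖expSum N C (p.1 - p.2)‖ ^ 2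
        < ∑ _p ∈ C ×ˢ C, (#C : ℝ) ^ 2 :=
        sum_lt_sum (fun p _ => norm_expSum_sq_le N C _)
          ⟨(j, l), mem_product.2 ⟨hj, hl⟩, norm_expSum_sq_lt hN hx hy h⟩
    _ = #C ^ 4 := by simp; ring

lemma fourierEnergy_pos (N : ℕ) (hC : C.Nonempty) : 0 < fourierEnergy N C := by
  obtain ⟨j, hj⟩ := hC
  calc (0 : ℝ) < ‖expSum N C (j - j)‖ ^ 2 := by
        rw [sub_self, expSum_zero, Complex.norm_natCast]
        exact pow_pos (Nat.cast_pos.2 (card_pos.2 ⟨j, hj⟩)) 2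
    _ ≤ ∑ l ∈ C, ‖expSum N C (j - l)‖ ^ 2 :=
        single_le_sum (f := fun l : ℕ => ‖expSum N C (j - l)‖ ^ 2) (fun _ _ => by positivity) hj
    _ ≤ fourierEnergy N C :=
        single_le_sum (f := fun i : ℕ => ∑ l ∈ C, ‖expSum N C (i - l)‖ ^ 2)
          (fun _ _ => by positivity) hj

lemma sum_norm_sum_mul_phase_sq_le_fourierEnergy (N : ℕ) (C : Finset ℕ) (c : ℕ → ℂ)
    (hc : ∀ s ∈ C, ‖c s‖ ≤ 1) :
    ∑ b ∈ C, ∑ b' ∈ C, ‖∑ s ∈ C, c s * phase N ((b - b') * s)‖ ^ 2 ≤ fourierEnergy N C := by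
  set w : ℕ → ℕ → ℂ := fun s s' => c s * starRingEnd ℂ (c s') with hw
  have expand : ((∑ b ∈ C, ∑ b' ∈ C, ‖∑ s ∈ C, c s * phase N ((b - b') * s)‖ ^ 2 : ℝ) : ℂ)
      = ∑ s ∈ C, ∑ s' ∈ C, w s s' * ((‖expSum N C (s - s')‖ ^ 2 : ℝ) : ℂ) := by
    simp_rw [Complex.ofReal_sum, ofReal_norm_sum_sq, ofReal_norm_expSum_sq, mul_sum]
    refine (sum_sum_comm_sum_sum C C _).trans (sum_congr rfl fun s _ => sum_congr rfl fun s' _ =>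
      sum_congr rfl fun b _ => sum_congr rfl fun b' _ => ?_)
    rw [hw, map_mul, conj_phase, mul_mul_mul_comm, ← phase_add]
    congr 2
    ring
  calc ∑ b ∈ C, ∑ b' ∈ C, ‖∑ s ∈ C, c s * phase N ((b - b') * s)‖ ^ 2
      = ‖∑ s ∈ C, ∑ s' ∈ C, w s s' * ((‖expSum N C (s - s')‖ ^ 2 : ℝ) : ℂ)‖ := by
        rw [← expand, Complex.norm_real, Real.norm_of_nonneg (by positivity)]
    _ ≤ ∑ s ∈ C, ∑ s' ∈ C, ‖w s s' * ((‖expSum N C (s - s')‖ ^ 2 : ℝ) : ℂ)‖ :=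
        (norm_sum_le _ _).trans (sum_le_sum fun s _ => norm_sum_le _ _)
    _ ≤ fourierEnergy N C := by
        refine sum_le_sum fun s hs => sum_le_sum fun s' hs' => ?_
        rw [hw, norm_mul, norm_mul, RCLike.norm_conj, Complex.norm_real,
          Real.norm_of_nonneg (by positivity)]
        have := mul_le_one₀ (hc s hs) (norm_nonneg _) (hc s' hs')
        exact mul_le_of_le_one_left (by positivity) this

end Energy

section Cantor

variable {M : ℕ} {A : Finset ℕ}

lemma Ck_zero (M : ℕ) (A : Finset ℕ) : Ck M A 0 = {0} := by
  simp [Ck]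

lemma Ck_succ (M : ℕ) (A : Finset ℕ) (k : ℕ) :
    Ck M A (k + 1) = (A ×ˢ Ck M A k).image fun p => p.1 + M * p.2 := by
  ext x
  simp only [Ck, mem_image, mem_product, Fintype.mem_piFinset, Prod.exists]
  constructor
  · rintro ⟨a, ha, rfl⟩
    refine ⟨a 0, _, ⟨ha 0, Fin.tail a, fun i => ha _, rfl⟩, ?_⟩
    simp [Fin.sum_univ_succ, mul_sum, Fin.tail, pow_succ']
    exact sum_congr rfl fun i _ => by ring
  · rintro ⟨a₀, _, ⟨ha₀, a, ha, rfl⟩, rfl⟩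
    refine ⟨Fin.cons a₀ a, Fin.cases ha₀ ha, ?_⟩
    simp [Fin.sum_univ_succ, mul_sum, pow_succ']
    exact sum_congr rfl fun i _ => by ring

lemma Ck_one (M : ℕ) (A : Finset ℕ) : Ck M A 1 = A := by
  ext; simp [Ck_succ, Ck_zero]

lemma add_mul_mem_Ck_succ {k a y : ℕ} (ha : a ∈ A) (hy : y ∈ Ck M A k) :
    a + M * y ∈ Ck M A (k + 1) := by
  rw [Ck_succ]
  exact mem_image_of_mem _ (mem_product.2 ⟨ha, hy⟩ : (a, y) ∈ A ×ˢ Ck M A k)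

lemma injOn_add_mul (hA : A ⊆ range M) (S : Finset ℕ) :
    Set.InjOn (fun p : ℕ × ℕ => p.1 + M * p.2) (A ×ˢ S : Finset (ℕ × ℕ)) := by
  rintro ⟨a, y⟩ h ⟨a', y'⟩ h' (hEq : a + M * y = a' + M * y')
  simp only [coe_product, Set.mem_prod, mem_coe] at h h'
  have ha : a < M := mem_range.1 (hA h.1)
  have ha' : a' < M := mem_range.1 (hA h'.1)
  have hmod := congrArg (· % M) hEq
  simp only [Nat.add_mul_mod_self_left, Nat.mod_eq_of_lt ha, Nat.mod_eq_of_lt ha'] at hmod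
  subst hmod
  simp only [Prod.mk.injEq, true_and]
  exact Nat.eq_of_mul_eq_mul_left (by omega) (Nat.add_left_cancel hEq)

lemma sum_Ck_succ (hA : A ⊆ range M) {β : Type*} [AddCommMonoid β] (k : ℕ) (f : ℕ → β) :
    ∑ x ∈ Ck M A (k + 1), f x = ∑ a ∈ A, ∑ y ∈ Ck M A k, f (a + M * y) := by
  rw [Ck_succ, sum_image (injOn_add_mul hA _), sum_product]

lemma card_Ck (hA : A ⊆ range M) (k : ℕ) : #(Ck M A k) = #A ^ k := by
  induction k with
  | zero => simp [Ck_zero]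
  | succ k ih =>
    rw [Ck_succ, card_image_of_injOn (injOn_add_mul hA _), card_product, ih, pow_succ']

lemma Ck_subset_range (hA : A ⊆ range M) (k : ℕ) : Ck M A k ⊆ range (M ^ k) := by
  induction k with
  | zero => simp [Ck_zero]
  | succ k ih =>
    intro x hx
    rw [Ck_succ, mem_image] at hx
    obtain ⟨⟨a, y⟩, hay, rfl⟩ := hx
    have ha : a < M := mem_range.1 (hA (mem_product.1 hay).1)
    have hy : y + 1 ≤ M ^ k := mem_range.1 (ih (mem_product.1 hay).2)
    rw [mem_range]
    calc a + M * y < M * (y + 1) := by linarith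
      _ ≤ M * M ^ k := Nat.mul_le_mul_left M hy
      _ = M ^ (k + 1) := (pow_succ' M k).symm

lemma sum_Ck_add (hA : A ⊆ range M) {β : Type*} [AddCommMonoid β] (p q : ℕ) (f : ℕ → β) :
    ∑ x ∈ Ck M A (p + q), f x = ∑ c ∈ Ck M A p, ∑ d ∈ Ck M A q, f (c + M ^ p * d) := by
  induction p generalizing f with
  | zero => simp [Ck_zero]
  | succ p ih =>
    rw [Nat.add_right_comm, sum_Ck_succ hA, sum_Ck_succ hA]
    refine sum_congr rfl fun a _ => ?_
    rw [ih]
    exact sum_congr rfl fun c _ => sum_congr rfl fun d _ => congrArg f (by ring)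

end Cantor

lemma dftInd_add_sub {N : ℕ} (hN : N ≠ 0) {C : Finset ℕ} (hC : C ⊆ range N) {j : ℕ}
    (hj : j ≤ N) (l : ℕ) : dftInd N C (l + N - j) = ((1 / √N : ℝ) : ℂ) * expSum N C (j - l) := by
  simp only [dftInd, expSum, ite_mul, one_mul, zero_mul, sum_ite_mem, inter_eq_right.2 hC]
  congr 1
  refine sum_congr rfl fun x _ => ?_
  have hexp : Complex.exp (-(2 * Real.pi * Complex.I * ((l + N - j : ℕ) : ℂ) * x) / N)
      = phase N ((j - l) * x + N * -x) := by
    rw [phase]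
    congr 1
    push_cast [show j ≤ l + N by omega]
    ring
  rw [hexp, phase_add_natCast_mul hN]

lemma sum_indicator_mul_indicator_mul_norm_dftInd_sq {N : ℕ} (hN : N ≠ 0) {S : Finset ℕ}
    (hS : S ⊆ range N) :
    (1 / (N : ℝ)) * ∑ j ∈ range N, ∑ l ∈ range N,
      (if j ∈ S then (1 : ℝ) else 0) * (if l ∈ S then (1 : ℝ) else 0) *
        ‖dftInd N S (l + N - j)‖ ^ 2
      = fourierEnergy N S / (N : ℝ) ^ 2 := by
  simp only [ite_mul, one_mul, zero_mul, sum_ite_irrel, sum_const_zero, sum_ite_mem,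
    inter_eq_right.2 hS]
  have hterm : ∀ j ∈ S, ∀ l, ‖dftInd N S (l + N - j)‖ ^ 2 = ‖expSum N S (j - l)‖ ^ 2 / N := by
    intro j hj l
    rw [dftInd_add_sub hN hS (mem_range.1 (hS hj)).le, norm_mul, Complex.norm_real, mul_pow,
      Real.norm_eq_abs, sq_abs, div_pow, Real.sq_sqrt (Nat.cast_nonneg N)]
    ring
  rw [sum_congr rfl fun j hj => sum_congr rfl fun l _ => hterm j hj l, fourierEnergy]
  simp only [← sum_div]
  ring

section CantorEnergy

variable {M : ℕ} {A : Finset ℕ}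

lemma tk_eq_fourierEnergy (hM : M ≠ 0) (hA : A ⊆ range M) (k : ℕ) :
    tk M A k = fourierEnergy (M ^ k) (Ck M A k) / ((M ^ k : ℕ) : ℝ) ^ 2 :=
  sum_indicator_mul_indicator_mul_norm_dftInd_sq (pow_ne_zero k hM) (Ck_subset_range hA k)

lemma expSum_Ck_add (hM : M ≠ 0) (hA : A ⊆ range M) (p q : ℕ) (d : ℤ) :
    expSum (M ^ p * M ^ q) (Ck M A (p + q)) d
      = expSum (M ^ p * M ^ q) (Ck M A q) d * expSum (M ^ p) (Ck M A p) d := by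
  rw [expSum, add_comm p q, sum_Ck_add hA, expSum, expSum, sum_mul_sum]
  refine sum_congr rfl fun s _ => sum_congr rfl fun t _ => ?_
  rw [mul_comm (M ^ p), ← phase_mul_natCast_mul (pow_ne_zero q hM) (d * t), ← phase_add]
  congr 1
  push_cast
  ring

lemma fourierEnergy_Ck_add_le (hM : M ≠ 0) (hA : A ⊆ range M) (p q : ℕ) :
    fourierEnergy (M ^ (p + q)) (Ck M A (p + q))
      ≤ fourierEnergy (M ^ p) (Ck M A p) * fourierEnergy (M ^ q) (Ck M A q) := by
  set Cp := Ck M A p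
  set Cq := Ck M A q
  have hMp : M ^ p ≠ 0 := pow_ne_zero p hM
  have hsplit : ∀ a a' b b' : ℕ,
      ‖expSum (M ^ p * M ^ q) (Ck M A (p + q)) ((a + M ^ p * b : ℕ) - (a' + M ^ p * b' : ℕ))‖ ^ 2
        = ‖expSum (M ^ p) Cp (a - a')‖ ^ 2 * ‖∑ s ∈ Cq,
            phase (M ^ p * M ^ q) ((a - a') * s) * phase (M ^ q) ((b - b') * s)‖ ^ 2 := by
    intro a a' b b'
    have hdiff : ((a + M ^ p * b : ℕ) : ℤ) - (a' + M ^ p * b' : ℕ)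
        = (a - a') + (M ^ p : ℕ) * ((b : ℤ) - b') := by
      push_cast
      ring
    rw [expSum_Ck_add hM hA, hdiff, expSum_add_natCast_mul hMp,
      expSum_add_natCast_mul_eq_sum hMp, norm_mul, mul_pow, mul_comm]
  calc fourierEnergy (M ^ (p + q)) (Ck M A (p + q))
      = ∑ a ∈ Cp, ∑ a' ∈ Cp, ‖expSum (M ^ p) Cp (a - a')‖ ^ 2 * ∑ b ∈ Cq, ∑ b' ∈ Cq, ‖∑ s ∈ Cq,
          phase (M ^ p * M ^ q) ((a - a') * s) * phase (M ^ q) ((b - b') * s)‖ ^ 2 := by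
        rw [fourierEnergy, pow_add, sum_Ck_add hA]
        simp_rw [sum_Ck_add hA, hsplit, mul_sum]
        exact sum_congr rfl fun a _ => sum_comm
    _ ≤ ∑ a ∈ Cp, ∑ a' ∈ Cp, ‖expSum (M ^ p) Cp (a - a')‖ ^ 2 * fourierEnergy (M ^ q) Cq := by
        gcongr with a _ a' _
        exact sum_norm_sum_mul_phase_sq_le_fourierEnergy _ _ _ fun s _ => (norm_phase _ _).le
    _ = fourierEnergy (M ^ p) Cp * fourierEnergy (M ^ q) Cq := by
        simp only [fourierEnergy, sum_mul]

/-- At level `1` the strict bound can fail (for `M = 4`, `A = {0, 2}` every phase is trivial). -/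
lemma fourierEnergy_Ck_two_lt (hM : M ≠ 0) (hA : A ⊆ range M)
    (hA2 : 2 ≤ #A) : fourierEnergy (M ^ 2) (Ck M A 2) < (#A : ℝ) ^ 8 := by
  obtain ⟨a, ha, a', ha', hne⟩ := one_lt_card.1 hA2
  have hmem : ∀ {b}, b ∈ A → b + M * a' ∈ Ck M A 2 := fun hb =>
    add_mul_mem_Ck_succ hb (by rwa [Ck_one])
  set j := a + M * a'
  set l := a' + M * a'
  have hd : ¬ ((M ^ 2 : ℕ) : ℤ) ∣ ((j : ℤ) - l) * ((j : ℤ) - l) := by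
    have haM : a < M := mem_range.1 (hA ha)
    have ha'M : a' < M := mem_range.1 (hA ha')
    have hdiff : (j : ℤ) - l = a - a' := by push_cast [j, l]; ring
    have hpos : 0 < ((a : ℤ) - a') ^ 2 := by
      have : (a : ℤ) - a' ≠ 0 := sub_ne_zero.2 (by exact_mod_cast hne)
      positivity
    have hlt : ((a : ℤ) - a') ^ 2 < (M : ℤ) ^ 2 := sq_lt_sq' (by omega) (by omega)
    rw [hdiff, ← sq, Nat.cast_pow]
    exact fun h => (Int.le_of_dvd hpos h).not_gt hlt
  have := fourierEnergy_lt (pow_ne_zero 2 hM) (hmem ha) (hmem ha') (hmem ha) (hmem ha') hd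
  rwa [card_Ck hA, Nat.cast_pow, ← pow_mul] at this

end CantorEnergy

lemma le_mul_sqrt_pow_of_submultiplicative {u : ℕ → ℝ} (hu : ∀ n, 0 ≤ u n)
    (hsub : ∀ m n, u (m + n) ≤ u m * u n) (n : ℕ) : u (n + 1) ≤ u 1 * √(u 2) ^ n := by
  induction n using Nat.twoStepInduction with
  | zero => simp
  | one =>
    have hsqrt : √(u 2) ≤ u 1 := by
      simpa [Real.sqrt_mul_self (hu 1)] using Real.sqrt_le_sqrt (hsub 1 1)
    calc u 2 = √(u 2) * √(u 2) := (Real.mul_self_sqrt (hu 2)).symm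
      _ ≤ u 1 * √(u 2) ^ 1 := by rw [pow_one]; gcongr
  | more n _ ih =>
    calc u (n + 2 + 1) = u (2 + (n + 1)) := by ring_nf
      _ ≤ u 2 * (u 1 * √(u 2) ^ n) := (hsub 2 (n + 1)).trans (by gcongr; exact hu 2)
      _ = u 1 * √(u 2) ^ (n + 2) := by rw [pow_add, Real.sq_sqrt (hu 2)]; ring

lemma natCast_pow_rpow_eq_sqrt_pow_div {b : ℕ} (hb : 1 < b) {q : ℝ} (hq : 0 < q) (k : ℕ) :
    ((b ^ k : ℕ) : ℝ) ^ (-4 * (1 / 2 - Real.logb b q / 8)) = √q ^ k / ((b ^ k : ℕ) : ℝ) ^ 2 := by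
  have hb0 : (0 : ℝ) < b := by positivity
  have hb1 : (b : ℝ) ≠ 1 := by exact_mod_cast hb.ne'
  have hsqrt : (b : ℝ) ^ (Real.logb b q / 2) = √q := by
    rw [div_eq_mul_one_div, Real.rpow_mul hb0.le, Real.rpow_logb hb0 hb1 hq, Real.sqrt_eq_rpow]
  rw [show -4 * (1 / 2 - Real.logb b q / 8) = Real.logb b q / 2 - 2 by ring,
    Real.rpow_sub (by positivity), Real.rpow_two, Nat.cast_pow, ← Real.rpow_natCast_mul hb0.le,
    mul_comm, Real.rpow_mul_natCast hb0.le, hsqrt]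

theorem stmt5_general (M : ℕ) (hM : 2 ≤ M) (A : Finset ℕ) (hA : A ⊆ Finset.range M)
    (hA2 : 2 ≤ A.card) :
    ∃ β : ℝ, 1 / 2 - Real.log A.card / Real.log M < β ∧
      ∀ ε : ℝ, 0 < ε → ∃ Cε : ℝ, 0 < Cε ∧ ∀ k : ℕ, 1 ≤ k →
        tk M A k ≤ Cε * ((M ^ k : ℕ) : ℝ) ^ (-4 * β + ε) := by
  have hM0 : M ≠ 0 := by omega
  set u : ℕ → ℝ := fun k => fourierEnergy (M ^ k) (Ck M A k)
  have hu_pos : ∀ k, 0 < u k := fun k =>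
    fourierEnergy_pos _ (card_pos.1 (by rw [card_Ck hA]; positivity))
  have hu_bound : ∀ n, u (n + 1) ≤ u 1 * √(u 2) ^ n :=
    le_mul_sqrt_pow_of_submultiplicative (fun k => (hu_pos k).le)
      (fourierEnergy_Ck_add_le hM0 hA)
  have hC_pos : 0 < u 1 / √(u 2) := div_pos (hu_pos 1) (Real.sqrt_pos.2 (hu_pos 2))
  set β := 1 / 2 - Real.logb M (u 2) / 8 with hβ
  refine ⟨β, ?_, fun ε hε => ⟨u 1 / √(u 2), hC_pos, fun k hk => ?_⟩⟩
  · have := Real.logb_lt_logb (b := M) (by exact_mod_cast hM) (hu_pos 2)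
      (fourierEnergy_Ck_two_lt hM0 hA hA2)
    rw [Real.logb_pow, Nat.cast_ofNat] at this
    rw [hβ, Real.log_div_log]
    linarith
  obtain ⟨n, rfl⟩ := Nat.exists_eq_add_of_le' hk
  have hM_pow : (1 : ℝ) ≤ ((M ^ (n + 1) : ℕ) : ℝ) := by
    exact_mod_cast Nat.one_le_pow _ _ (by omega)
  calc tk M A (n + 1) = u (n + 1) / ((M ^ (n + 1) : ℕ) : ℝ) ^ 2 := tk_eq_fourierEnergy hM0 hA _
    _ ≤ u 1 * √(u 2) ^ n / ((M ^ (n + 1) : ℕ) : ℝ) ^ 2 := by gcongr; exact hu_bound n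
    _ = u 1 / √(u 2) * ((M ^ (n + 1) : ℕ) : ℝ) ^ (-4 * β) := by
        rw [natCast_pow_rpow_eq_sqrt_pow_div (by omega) (hu_pos 2)]
        have := Real.sqrt_pos.2 (hu_pos 2)
        field_simp
        ring
    _ ≤ u 1 / √(u 2) * ((M ^ (n + 1) : ℕ) : ℝ) ^ (-4 * β + ε) :=
        mul_le_mul_of_nonneg_left (Real.rpow_le_rpow_of_exponent_le hM_pow (by linarith))
          hC_pos.le

/-- If `2 ≤ |A| ≤ M-1` (so `δ = log|A|/log M ∈ (0,1)`), there exists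
`β > 1/2 - δ` such that for every `ε > 0` there is `C_ε > 0` with
`t_k ≤ C_ε (M^k)^{-4β+ε}` for all `k ≥ 1`. -/
theorem stmt5 (M : ℕ) (hM : 2 ≤ M) (A : Finset ℕ) (hA : A ⊆ Finset.range M)
    (hA2 : 2 ≤ A.card) (hAM : A.card ≤ M - 1) :
    ∃ β : ℝ, 1 / 2 - Real.log A.card / Real.log M < β ∧
      ∀ ε : ℝ, 0 < ε → ∃ Cε : ℝ, 0 < Cε ∧ ∀ k : ℕ, 1 ≤ k →
        tk M A k ≤ Cε * ((M ^ k : ℕ) : ℝ) ^ (-4 * β + ε) :=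
  stmt5_general M hM A hA hA2
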